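/- arXiv:math-ph/0511004 — 3 statements merged into one kernel-verified Lean document; each statement's English description precedes it below -/
import Mathlib

section
/- There exists a Lie algebra automorphism of sl2 of order 3 sending X to Y, Y to Z, and Z to X, where X = 2e-h, Y = -2f-h, Z = h. -/
namespace TetPaper
variable {K : Type*} [Field K]

/-- Auxiliary bracket for `sl2` in the `e,f,h` coordinates. -/
def sl2b (u v : Fin 3 → K) : Fin 3 → K :=
  ![2*(u 2 * v 0 - u 0 * v 2), 2*(u 1 * v 2 - u 2 * v 1), u 0 * v 1 - u 1 * v 0]

lemma sl2b_add_lie (x y z : Fin 3 → K) : sl2b (x + y) z = sl2b x z + sl2b y z := by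
  funext i; fin_cases i <;> simp [sl2b] <;> ring

lemma sl2b_lie_add (x y z : Fin 3 → K) : sl2b x (y + z) = sl2b x y + sl2b x z := by
  funext i; fin_cases i <;> simp [sl2b] <;> ring

lemma sl2b_lie_self (x : Fin 3 → K) : sl2b x x = 0 := by
  funext i; fin_cases i <;> simp [sl2b, -mul_eq_zero] <;> ring

lemma sl2b_leibniz (x y z : Fin 3 → K) :
    sl2b x (sl2b y z) = sl2b (sl2b x y) z + sl2b y (sl2b x z) := by
  funext i; fin_cases i <;> simp [sl2b] <;> ring

lemma sl2b_smul (t : K) (x y : Fin 3 → K) : sl2b x (t • y) = t • sl2b x y := by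
  funext i; fin_cases i <;> simp [sl2b] <;> ring

end TetPaper

/-- The Lie algebra `sl2` over `K`, with basis `e, f, h` (coordinates `0, 1, 2`)
and brackets `[h,e] = 2e`, `[h,f] = -2f`, `[e,f] = h`. -/
def Sl2 (K : Type*) := Fin 3 → K

noncomputable instance {K : Type*} [Field K] : AddCommGroup (Sl2 K) :=
  inferInstanceAs (AddCommGroup (Fin 3 → K))

noncomputable instance {K : Type*} [Field K] : Module K (Sl2 K) :=
  inferInstanceAs (Module K (Fin 3 → K))

noncomputable instance {K : Type*} [Field K] : LieRing (Sl2 K) where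
  bracket u v := TetPaper.sl2b u v
  add_lie x y z := TetPaper.sl2b_add_lie x y z
  lie_add x y z := TetPaper.sl2b_lie_add x y z
  lie_self x := TetPaper.sl2b_lie_self x
  leibniz_lie x y z := TetPaper.sl2b_leibniz x y z

noncomputable instance {K : Type*} [Field K] : LieAlgebra K (Sl2 K) where
  lie_smul t x y := TetPaper.sl2b_smul t x y

namespace Sl2
variable (K : Type*) [Field K]
/-- The basis vector `e` of `sl2`. -/
noncomputable def e : Sl2 K := (![1,0,0] : Fin 3 → K)
/-- The basis vector `f` of `sl2`. -/
noncomputable def f : Sl2 K := (![0,1,0] : Fin 3 → K)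
/-- The basis vector `h` of `sl2`. -/
noncomputable def h : Sl2 K := (![0,0,1] : Fin 3 → K)
end Sl2


/-!
The automorphism is the linear map `e ↦ e - f - h`, `f ↦ -e`, `h ↦ 2e - h`, which permutes
`X, Y, Z` cyclically. That it preserves the bracket and that its cube is the identity are
coordinate computations, and it moves `e`.
-/

namespace Sl2

@[ext]
lemma ext {K : Type*} {u v : Sl2 K} (h : ∀ i, u i = v i) : u = v :=
  funext h

variable {K : Type*} [Field K]

@[simp] lemma add_apply (u v : Sl2 K) (i : Fin 3) : (u + v) i = u i + v i := rfl
@[simp] lemma sub_apply (u v : Sl2 K) (i : Fin 3) : (u - v) i = u i - v i := rfl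
@[simp] lemma neg_apply (u : Sl2 K) (i : Fin 3) : (-u) i = -u i := rfl
@[simp] lemma smul_apply (t : K) (u : Sl2 K) (i : Fin 3) : (t • u) i = t * u i := rfl

@[simp] lemma e_apply (i : Fin 3) : e K i = ![1, 0, 0] i := rfl
@[simp] lemma f_apply (i : Fin 3) : f K i = ![0, 1, 0] i := rfl
@[simp] lemma h_apply (i : Fin 3) : h K i = ![0, 0, 1] i := rfl

@[simp] lemma lie_apply_zero (u v : Sl2 K) : ⁅u, v⁆ 0 = 2 * (u 2 * v 0 - u 0 * v 2) := rfl
@[simp] lemma lie_apply_one (u v : Sl2 K) : ⁅u, v⁆ 1 = 2 * (u 1 * v 2 - u 2 * v 1) := rfl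
@[simp] lemma lie_apply_two (u v : Sl2 K) : ⁅u, v⁆ 2 = u 0 * v 1 - u 1 * v 0 := rfl

def rotate (u : Sl2 K) : Sl2 K :=
  (![u 0 - u 1 + 2 * u 2, -u 0, -u 0 - u 2] : Fin 3 → K)

@[simp] lemma rotate_apply_zero (u : Sl2 K) : rotate u 0 = u 0 - u 1 + 2 * u 2 := rfl
@[simp] lemma rotate_apply_one (u : Sl2 K) : rotate u 1 = -u 0 := rfl
@[simp] lemma rotate_apply_two (u : Sl2 K) : rotate u 2 = -u 0 - u 2 := rfl

lemma rotate_rotate_rotate (u : Sl2 K) : rotate (rotate (rotate u)) = u := by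
  ext i; fin_cases i <;> simp <;> ring

lemma rotate_lie (u v : Sl2 K) : rotate ⁅u, v⁆ = ⁅rotate u, rotate v⁆ := by
  ext i; fin_cases i <;> simp <;> ring

def rotateEquiv : Sl2 K ≃ₗ⁅K⁆ Sl2 K where
  toFun := rotate
  map_add' u v := by ext i; fin_cases i <;> simp <;> ring
  map_smul' t u := by ext i; fin_cases i <;> simp <;> ring
  map_lie' := rotate_lie _ _
  invFun := rotate ∘ rotate
  left_inv := rotate_rotate_rotate
  right_inv := rotate_rotate_rotate

lemma rotate_two_e_sub_h : rotate ((2 : K) • e K - h K) = -((2 : K) • f K) - h K := by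
  ext i; fin_cases i <;> simp; norm_num

lemma rotate_neg_two_f_sub_h : rotate (-((2 : K) • f K) - h K) = h K := by
  ext i; fin_cases i <;> simp

lemma rotate_h : rotate (h K) = (2 : K) • e K - h K := by
  ext i; fin_cases i <;> simp

lemma rotateEquiv_ne_refl : (rotateEquiv : Sl2 K ≃ₗ⁅K⁆ Sl2 K) ≠ LieEquiv.refl := by
  intro h_eq
  have h_e : rotate (e K) 1 = e K 1 := congrArg (fun φ : Sl2 K ≃ₗ⁅K⁆ Sl2 K ↦ φ (e K) 1) h_eq
  simp at h_e

end Sl2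

theorem stmt2_general (K : Type*) [Field K]
    (X Y Z : Sl2 K)
    (hX : X = (2:K) • Sl2.e K - Sl2.h K)
    (hY : Y = -((2:K) • Sl2.f K) - Sl2.h K)
    (hZ : Z = Sl2.h K) :
    ∃ φ : Sl2 K ≃ₗ⁅K⁆ Sl2 K,
      φ X = Y ∧ φ Y = Z ∧ φ Z = X ∧
      (∀ v, φ (φ (φ v)) = v) ∧ φ ≠ LieEquiv.refl := by
  subst hX hY hZ
  exact ⟨Sl2.rotateEquiv, Sl2.rotate_two_e_sub_h, Sl2.rotate_neg_two_f_sub_h, Sl2.rotate_h,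
    Sl2.rotate_rotate_rotate, Sl2.rotateEquiv_ne_refl⟩

/-- there is a Lie algebra automorphism of `sl2` of order 3 sending
`X ↦ Y`, `Y ↦ Z`, `Z ↦ X`, where `X = 2e-h`, `Y = -2f-h`, `Z = h`. -/
theorem stmt2 (K : Type*) [Field K] [CharZero K]
    (X Y Z : Sl2 K)
    (hX : X = (2:K) • Sl2.e K - Sl2.h K)
    (hY : Y = -((2:K) • Sl2.f K) - Sl2.h K)
    (hZ : Z = Sl2.h K) :
    ∃ φ : Sl2 K ≃ₗ⁅K⁆ Sl2 K,
      φ X = Y ∧ φ Y = Z ∧ φ Z = X ∧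
      (∀ v, φ (φ (φ v)) = v) ∧ φ ≠ LieEquiv.refl :=
  stmt2_general K X Y Z hX hY hZ
end

section
/- In the Onsager algebra O, the map sending A_m to A_{1-m} for all integers m and G_l to -G_l for all positive integers l is a Lie algebra automorphism. -/
/-!
Defined on the basis, the map is visibly an involution, so it only remains to check that it
preserves brackets of basis vectors. Since `m ↦ 1 - m` reverses the order of `ℤ` but preserves
differences, for `m < l` the bracket `[A l, A m] = 2 G (l - m)` goes to
`-2 G (l - m) = -[A (1 - m), A (1 - l)] = [A (1 - l), A (1 - m)]`; likewise
`[G l, A m] = A (m + l) - A (m - l)` goes to `A (1 - m - l) - A (1 - m + l) = [-G l, A (1 - m)]`.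
-/

/-- The hypotheses saying that the Lie algebra `O` over `K`, together with the
elements `A m` (`m ∈ ℤ`) and `G l` (`l ≥ 1`), is the Onsager algebra: these
elements form a basis and satisfy `[A l, A m] = 2 G (l-m)` for `l > m`,
`[G l, A m] = A (m+l) - A (m-l)` and `[G l, G m] = 0`. -/
structure IsOnsager (K : Type*) [Field K] (O : Type*) [LieRing O] [LieAlgebra K O]
    (A : ℤ → O) (G : ℤ → O) : Prop where
  basis : ∃ B : Module.Basis (ℤ ⊕ {l : ℤ // 1 ≤ l}) K O,
    (∀ m : ℤ, B (Sum.inl m) = A m) ∧ (∀ l : {l : ℤ // 1 ≤ l}, B (Sum.inr l) = G l)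
  lie_AA : ∀ l m : ℤ, m < l → ⁅A l, A m⁆ = (2:K) • G (l - m)
  lie_GA : ∀ l m : ℤ, 1 ≤ l → ⁅G l, A m⁆ = A (m + l) - A (m - l)
  lie_GG : ∀ l m : ℤ, 1 ≤ l → 1 ≤ m → ⁅G l, G m⁆ = 0

open Module

theorem LinearMap.map_lie_of_basis {ι R L L' : Type*} [CommRing R] [LieRing L] [LieAlgebra R L]
    [LieRing L'] [LieAlgebra R L'] (b : Basis ι R L) (f : L →ₗ[R] L')
    (h : ∀ i j, f ⁅b i, b j⁆ = ⁅f (b i), f (b j)⁆) (x y : L) : f ⁅x, y⁆ = ⁅f x, f y⁆ := by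
  let lhs : L →ₗ[R] L →ₗ[R] L' := LinearMap.mk₂ R (fun x y => f ⁅x, y⁆)
    (by simp [add_lie]) (by simp [smul_lie]) (by simp [lie_add]) (by simp [lie_smul])
  let rhs : L →ₗ[R] L →ₗ[R] L' := LinearMap.mk₂ R (fun x y => ⁅f x, f y⁆)
    (by simp [add_lie]) (by simp [smul_lie]) (by simp [lie_add]) (by simp [lie_smul])
  exact LinearMap.congr_fun₂ (LinearMap.ext_basis b b h : lhs = rhs) x y

namespace IsOnsager

variable {K O : Type*} [Field K] [LieRing O] [LieAlgebra K O]

noncomputable def reflection (B : Basis (ℤ ⊕ {l : ℤ // 1 ≤ l}) K O) : O →ₗ[K] O :=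
  B.constr K (Sum.elim (fun m => B (.inl (1 - m))) (fun l => -B (.inr l)))

variable (B : Basis (ℤ ⊕ {l : ℤ // 1 ≤ l}) K O)

@[simp]
theorem reflection_inl (m : ℤ) : reflection B (B (.inl m)) = B (.inl (1 - m)) := by
  simp [reflection, Basis.constr_basis]

@[simp]
theorem reflection_inr (l : {l : ℤ // 1 ≤ l}) : reflection B (B (.inr l)) = -B (.inr l) := by
  simp [reflection, Basis.constr_basis]

theorem reflection_involutive : Function.Involutive (reflection B) := by
  suffices h : reflection B ∘ₗ reflection B = LinearMap.id from LinearMap.congr_fun h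
  refine B.ext fun i => ?_
  rcases i with m | l <;> simp

variable {A G : ℤ → O}

theorem reflection_A (hA : ∀ m, B (.inl m) = A m) (m : ℤ) : reflection B (A m) = A (1 - m) := by
  rw [← hA, ← hA, reflection_inl]

theorem reflection_G (hG : ∀ l : {l : ℤ // 1 ≤ l}, B (.inr l) = G l) {l : ℤ} (hl : 1 ≤ l) :
    reflection B (G l) = -G l := by
  rw [← hG ⟨l, hl⟩, reflection_inr]

theorem reflection_lie_A_A (hO : IsOnsager K O A G)
    (hG : ∀ l : {l : ℤ // 1 ≤ l}, B (.inr l) = G l) (l m : ℤ) :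
    reflection B ⁅A l, A m⁆ = ⁅A (1 - l), A (1 - m)⁆ := by
  wlog hlt : m < l generalizing l m
  · rcases (not_lt.mp hlt).lt_or_eq with h | rfl
    · rw [← lie_skew, map_neg, this m l h, lie_skew]
    · simp
  rw [hO.lie_AA l m hlt, map_smul, reflection_G B hG (by omega), ← lie_skew,
    hO.lie_AA (1 - m) (1 - l) (by omega), show 1 - m - (1 - l) = l - m by ring, smul_neg]

theorem reflection_lie_G_A (hO : IsOnsager K O A G) (hA : ∀ m, B (.inl m) = A m) {l : ℤ}
    (hl : 1 ≤ l) (m : ℤ) : reflection B ⁅G l, A m⁆ = ⁅-G l, A (1 - m)⁆ := by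
  rw [hO.lie_GA l m hl, map_sub, reflection_A B hA, reflection_A B hA, neg_lie,
    hO.lie_GA l (1 - m) hl, show 1 - (m + l) = 1 - m - l by ring,
    show 1 - (m - l) = 1 - m + l by ring, neg_sub]

theorem reflection_lie (hO : IsOnsager K O A G) (hA : ∀ m, B (.inl m) = A m)
    (hG : ∀ l : {l : ℤ // 1 ≤ l}, B (.inr l) = G l) (x y : O) :
    reflection B ⁅x, y⁆ = ⁅reflection B x, reflection B y⁆ := by
  refine LinearMap.map_lie_of_basis B _ (fun i j => ?_) x y
  rcases i with m | ⟨l, hl⟩ <;> rcases j with m' | ⟨l', hl'⟩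
  · simp only [hA, reflection_A B hA]
    exact reflection_lie_A_A B hO hG m m'
  · simp only [hA, hG, reflection_A B hA, reflection_G B hG hl']
    rw [← lie_skew, map_neg, reflection_lie_G_A B hO hA hl', ← lie_skew, neg_neg]
  · simp only [hA, hG, reflection_A B hA, reflection_G B hG hl]
    exact reflection_lie_G_A B hO hA hl m'
  · simp only [hG, reflection_G B hG hl, reflection_G B hG hl']
    rw [hO.lie_GG l l' hl hl', map_zero, neg_lie, lie_neg, hO.lie_GG l l' hl hl', neg_neg]

end IsOnsager

theorem stmt5_general (K : Type*) [Field K]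
    (O : Type*) [LieRing O] [LieAlgebra K O] (A : ℤ → O) (G : ℤ → O)
    (hO : IsOnsager K O A G) :
    ∃ φ : O ≃ₗ⁅K⁆ O,
      (∀ m : ℤ, φ (A m) = A (1 - m)) ∧
      (∀ l : ℤ, 1 ≤ l → φ (G l) = -G l) := by
  obtain ⟨B, hA, hG⟩ := hO.basis
  let φ : O →ₗ⁅K⁆ O :=
    { IsOnsager.reflection B with map_lie' := IsOnsager.reflection_lie B hO hA hG _ _ }
  exact ⟨LieEquiv.ofBijective φ (IsOnsager.reflection_involutive B).bijective,
    IsOnsager.reflection_A B hA, fun l hl => IsOnsager.reflection_G B hG hl⟩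

/-- in the Onsager algebra, the map `A m ↦ A (1-m)`, `G l ↦ -G l`
is a Lie algebra automorphism. -/
theorem stmt5 (K : Type*) [Field K] [CharZero K]
    (O : Type*) [LieRing O] [LieAlgebra K O] (A : ℤ → O) (G : ℤ → O)
    (hO : IsOnsager K O A G) :
    ∃ φ : O ≃ₗ⁅K⁆ O,
      (∀ m : ℤ, φ (A m) = A (1 - m)) ∧
      (∀ l : ℤ, 1 ≤ l → φ (G l) = -G l) :=
  stmt5_general K O A G hO
end

section
/- The K-vector space A = K[T, T^{-1}, (T-1)^{-1}] decomposes as a direct sum A = K[T] ⊕ (T'-1)K[T'] ⊕ T''K[T''], where T' = 1 - T^{-1} and T'' = (1-T)^{-1}. -/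
set_option synthInstance.maxHeartbeats 1000000
set_option maxHeartbeats 1000000

open scoped Polynomial

/-- The algebra `K[T, T⁻¹, (T-1)⁻¹]`, realized as the subalgebra of the field of
rational functions generated by `T`, `T⁻¹` and `(T-1)⁻¹`. -/
noncomputable def Arat (K : Type*) [Field K] : Subalgebra K (RatFunc K) :=
  Algebra.adjoin K {RatFunc.X, RatFunc.X⁻¹, (RatFunc.X - 1)⁻¹}

/-- The element `T` of `Arat K`. -/
noncomputable def tA (K : Type*) [Field K] : Arat K :=
  ⟨RatFunc.X, Algebra.subset_adjoin (by simp)⟩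

/-- The element `T⁻¹` of `Arat K`. -/
noncomputable def tiA (K : Type*) [Field K] : Arat K :=
  ⟨RatFunc.X⁻¹, Algebra.subset_adjoin (by simp)⟩

/-- The element `T' = 1 - T⁻¹` of `Arat K`. -/
noncomputable def tpA (K : Type*) [Field K] : Arat K := 1 - tiA K

/-- The element `T'' = (1-T)⁻¹` of `Arat K`. -/
noncomputable def tppA (K : Type*) [Field K] : Arat K :=
  ⟨(1 - RatFunc.X)⁻¹, by
    have h1 : (RatFunc.X - 1)⁻¹ ∈ Arat K := Algebra.subset_adjoin (by simp)
    have h2 : ((1 : RatFunc K) - RatFunc.X)⁻¹ = -((RatFunc.X - 1)⁻¹) := by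
      rw [← neg_sub, inv_neg]
    rw [h2]; exact neg_mem h1⟩

/-- The three summands `K[T]`, `(T'-1)K[T']`, `T''K[T'']` of `A`. -/
noncomputable def DA (K : Type*) [Field K] : Fin 3 → Submodule K (Arat K) :=
  ![Submodule.span K (Set.range fun n : ℕ => (tA K) ^ n),
    Submodule.span K (Set.range fun n : ℕ => (tpA K - 1) * (tpA K) ^ n),
    Submodule.span K (Set.range fun n : ℕ => tppA K * (tppA K) ^ n)]

/-!
The three summands are spanned by the powers `T ^ n`, `(T' - 1) ^ (n + 1) = (-T⁻¹) ^ (n + 1)` and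
`T'' ^ (n + 1)` (the middle one because `K[T'] = K[T' - 1]`).

They span `A`: the generators `a = T`, `b = T' - 1`, `c = T''` satisfy `a * b = -1`,
`a * c = c - 1`, `b * c = b - c`, so every product of two of them is an affine combination of the
factors, and the sum of the three spans of powers is closed under multiplication.

They are independent: the coefficient of `T ^ (-(m + 1))` in the Laurent expansion at `0` vanishes
on `K[T]` and on `K[T'']`, which are regular at `0`, and is diagonal on the powers of `-T⁻¹`;
likewise the expansion at `1` separates `T''K[T'']` from the other two summands.
-/

open Submodule Set

section Dual

variable {ι K M : Type*} [Field K] [AddCommGroup M] [Module K M]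

theorem disjoint_span_range_iInf_ker (v : ι → M) (φ : ι → Module.Dual K M)
    (hdiag : ∀ i, φ i (v i) ≠ 0) (hoff : ∀ i j, i ≠ j → φ i (v j) = 0) :
    Disjoint (span K (range v)) (⨅ i, LinearMap.ker (φ i)) := by
  rw [disjoint_def]
  intro x hx hker
  obtain ⟨c, rfl⟩ := Finsupp.mem_span_range_iff_exists_finsupp.1 hx
  have hc : c = 0 := by
    ext i
    have h := LinearMap.mem_ker.1 (mem_iInf _ |>.1 hker i)
    rw [map_finsuppSum, Finsupp.sum_eq_single i
      (fun j _ hj => by rw [map_smul, hoff i j (Ne.symm hj), smul_zero])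
      (fun _ => by rw [zero_smul, map_zero]), map_smul, smul_eq_mul] at h
    simpa [hdiag i] using h
  simp [hc]

end Dual

section Powers

variable {K A : Type*} [Field K] [CommRing A] [Algebra K A]

theorem span_range_mul_pow (y z : A) :
    span K (range fun n : ℕ => y * z ^ n) =
      (Subalgebra.toSubmodule (Algebra.adjoin K {z})).map (LinearMap.mulLeft K y) := by
  rw [Algebra.adjoin_eq_span, ← Submonoid.powers_eq_closure, map_span, Submonoid.coe_powers,
    ← range_comp]
  rfl

theorem span_range_pow_le_sup {x : A} {P : Submodule K A} (h1 : 1 ∈ P) :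
    span K (range (x ^ ·)) ≤ P ⊔ span K (range fun n : ℕ => x * x ^ n) := by
  rw [span_le]
  rintro _ ⟨_ | n, rfl⟩
  · simpa using mem_sup_left h1
  · exact mem_sup_right (subset_span ⟨n, (pow_succ' x n).symm⟩)

theorem pow_mul_pow_mem_sup {a b : A} (h : a * b ∈ span K {a, b, 1}) (i j : ℕ) :
    a ^ i * b ^ j ∈ span K (range (a ^ ·)) ⊔ span K (range (b ^ ·)) := by
  obtain ⟨α, β, γ, h⟩ := mem_span_triple.1 h
  induction i generalizing j with
  | zero => simpa using mem_sup_right (subset_span (mem_range_self j))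
  | succ i ihi =>
    induction j with
    | zero => simpa using mem_sup_left (subset_span (mem_range_self (i + 1)))
    | succ j ihj =>
      have e : a ^ (i + 1) * b ^ (j + 1) =
          α • (a ^ (i + 1) * b ^ j) + β • (a ^ i * b ^ (j + 1)) + γ • (a ^ i * b ^ j) := by
        simp only [pow_succ, Algebra.smul_def] at h ⊢
        linear_combination (-(a ^ i * b ^ j)) * h
      rw [e]
      exact add_mem (add_mem (smul_mem _ _ ihj) (smul_mem _ _ (ihi _))) (smul_mem _ _ (ihi _))

theorem span_range_pow_mul_self_le (a : A) :
    span K (range (a ^ ·)) * span K (range (a ^ ·)) ≤ span K (range (a ^ ·)) := by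
  rw [span_mul_span, span_le]
  rintro _ ⟨_, ⟨i, rfl⟩, _, ⟨j, rfl⟩, rfl⟩
  exact subset_span ⟨i + j, pow_add a i j⟩

theorem span_range_pow_mul_le_sup {a b : A} (h : a * b ∈ span K {a, b, 1}) :
    span K (range (a ^ ·)) * span K (range (b ^ ·)) ≤
      span K (range (a ^ ·)) ⊔ span K (range (b ^ ·)) := by
  rw [span_mul_span, span_le]
  rintro _ ⟨_, ⟨i, rfl⟩, _, ⟨j, rfl⟩, rfl⟩
  exact pow_mul_pow_mem_sup h i j

theorem adjoin_le_sup_span_range_pow {a b c : A} (hab : a * b ∈ span K {a, b, 1})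
    (hac : a * c ∈ span K {a, c, 1}) (hbc : b * c ∈ span K {b, c, 1}) :
    Subalgebra.toSubmodule (Algebra.adjoin K {a, b, c}) ≤
      span K (range (a ^ ·)) ⊔ span K (range (b ^ ·)) ⊔ span K (range (c ^ ·)) := by
  set P := span K (range (a ^ ·))
  set Q := span K (range (b ^ ·))
  set R := span K (range (c ^ ·))
  have hmul : (P ⊔ Q ⊔ R) * (P ⊔ Q ⊔ R) ≤ P ⊔ Q ⊔ R := by
    simp only [Submodule.sup_mul, Submodule.mul_sup, sup_le_iff]
    rw [Submodule.mul_comm Q P, Submodule.mul_comm R P, Submodule.mul_comm R Q]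
    have hPP : P * P ≤ P ⊔ Q ⊔ R :=
      (span_range_pow_mul_self_le a).trans (le_sup_of_le_left le_sup_left)
    have hQQ : Q * Q ≤ P ⊔ Q ⊔ R :=
      (span_range_pow_mul_self_le b).trans (le_sup_of_le_left le_sup_right)
    have hRR : R * R ≤ P ⊔ Q ⊔ R := (span_range_pow_mul_self_le c).trans le_sup_right
    have hPQ : P * Q ≤ P ⊔ Q ⊔ R := (span_range_pow_mul_le_sup hab).trans le_sup_left
    have hPR : P * R ≤ P ⊔ Q ⊔ R :=
      (span_range_pow_mul_le_sup hac).trans (sup_le_sup_right le_sup_left R)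
    have hQR : Q * R ≤ P ⊔ Q ⊔ R :=
      (span_range_pow_mul_le_sup hbc).trans (sup_le_sup_right le_sup_right R)
    and_intros <;> assumption
  have hone : (1 : A) ∈ P ⊔ Q ⊔ R :=
    mem_sup_left (mem_sup_left (subset_span ⟨0, pow_zero a⟩))
  have hle : Algebra.adjoin K {a, b, c} ≤
      (P ⊔ Q ⊔ R).toSubalgebra hone fun x y hx hy => hmul (mul_mem_mul hx hy) := by
    rw [Algebra.adjoin_le_iff, insert_subset_iff, insert_subset_iff, singleton_subset_iff]
    exact ⟨mem_sup_left (mem_sup_left (subset_span ⟨1, pow_one a⟩)),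
      mem_sup_left (mem_sup_right (subset_span ⟨1, pow_one b⟩)),
      mem_sup_right (subset_span ⟨1, pow_one c⟩)⟩
  exact fun _ hx => hle hx

theorem adjoin_singleton_sub_one (x : A) : Algebra.adjoin K {x - 1} = Algebra.adjoin K {x} := by
  refine le_antisymm (Algebra.adjoin_le ?_) (Algebra.adjoin_le ?_) <;>
    rw [singleton_subset_iff, SetLike.mem_coe]
  · exact sub_mem (Algebra.self_mem_adjoin_singleton K x) (one_mem _)
  · simpa using add_mem (Algebra.self_mem_adjoin_singleton K (x - 1)) (one_mem _)

end Powers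

namespace RatFunc

variable {K : Type*} [Field K]

theorem coe_algebraMap_polynomial (p : K[X]) :
    ((algebraMap K[X] (RatFunc K) p : RatFunc K) : LaurentSeries K) =
      HahnSeries.ofPowerSeries ℤ K p :=
  (coe_coe p).symm

noncomputable def laurentCoeff (n : ℤ) : RatFunc K →ₗ[K] K where
  toFun f := (f : LaurentSeries K).coeff n
  map_add' f g := by simp
  map_smul' c f := by
    rw [Algebra.smul_def, algebraMap_eq_C, ← algebraMap_C, map_mul, coe_algebraMap_polynomial,
      Polynomial.coe_C, PowerSeries.coe_C, HahnSeries.C_mul_eq_smul, HahnSeries.coeff_smul,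
      RingHom.id_apply, smul_eq_mul]

theorem laurentCoeff_apply (n : ℤ) (f : RatFunc K) :
    laurentCoeff n f = (f : LaurentSeries K).coeff n := rfl

variable (K) in
noncomputable def regularAtZero : Subring (RatFunc K) :=
  (HahnSeries.ofPowerSeries ℤ K).range.comap (algebraMap (RatFunc K) (LaurentSeries K))

theorem laurentCoeff_eq_zero_of_mem_regularAtZero {f : RatFunc K} (hf : f ∈ regularAtZero K)
    {n : ℤ} (hn : n < 0) : laurentCoeff n f = 0 := by
  obtain ⟨w, hw⟩ := hf
  rw [laurentCoeff_apply, ← hw, PowerSeries.coeff_coe, if_pos hn]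

theorem algebraMap_mem_regularAtZero (p : K[X]) :
    algebraMap K[X] (RatFunc K) p ∈ regularAtZero K :=
  ⟨p, (coe_algebraMap_polynomial p).symm⟩

theorem inv_algebraMap_mem_regularAtZero {q : K[X]} (hq : q.coeff 0 ≠ 0) :
    (algebraMap K[X] (RatFunc K) q)⁻¹ ∈ regularAtZero K := by
  obtain ⟨u, hu⟩ : IsUnit (q : PowerSeries K) := by
    rwa [PowerSeries.isUnit_iff_constantCoeff, Polynomial.constantCoeff_coe, isUnit_iff_ne_zero]
  refine ⟨↑u⁻¹, ?_⟩
  rw [map_inv₀]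
  apply eq_inv_of_mul_eq_one_left
  rw [coe_algebraMap_polynomial, ← hu, ← map_mul, Units.inv_mul, map_one]

theorem laurentCoeff_neg_X_inv_pow (n : ℤ) (k : ℕ) :
    laurentCoeff n ((-X⁻¹ : RatFunc K) ^ k) = if n = -k then (-1) ^ k else 0 := by
  rw [laurentCoeff_apply, map_pow, map_neg, map_inv₀, coe_X, HahnSeries.inv_single, inv_one,
    ← HahnSeries.single_neg, HahnSeries.single_pow, HahnSeries.coeff_single]
  simp

theorem one_sub_X_ne_zero : (1 - X : RatFunc K) ≠ 0 := by
  rw [← algebraMap_X, ← map_one (algebraMap K[X] (RatFunc K)), ← map_sub]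
  exact algebraMap_ne_zero (sub_ne_zero.2 (by simpa using (Polynomial.X_ne_C (1 : K)).symm))

theorem laurent_one_X : laurent (1 : K) X = X + 1 := by
  rw [laurent_X, map_one]

end RatFunc

namespace Arat

open RatFunc

variable {K : Type*} [Field K]

@[simp] theorem coe_tA : (tA K : RatFunc K) = X := rfl
@[simp] theorem coe_tiA : (tiA K : RatFunc K) = X⁻¹ := rfl
@[simp] theorem coe_tppA : (tppA K : RatFunc K) = (1 - X)⁻¹ := rfl

theorem tpA_sub_one : tpA K - 1 = -tiA K := by
  rw [tpA, sub_sub_cancel_left]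

theorem coe_tpA_sub_one : ((tpA K - 1 : Arat K) : RatFunc K) = -X⁻¹ := by
  rw [tpA_sub_one, NegMemClass.coe_neg, coe_tiA]

theorem tA_mul_tpA_sub_one : tA K * (tpA K - 1) = -1 := by
  rw [tpA_sub_one, mul_neg]
  exact congrArg Neg.neg (Subtype.ext (mul_inv_cancel₀ X_ne_zero))

theorem tA_mul_tppA : tA K * tppA K = tppA K - 1 := by
  apply Subtype.ext
  have := one_sub_X_ne_zero (K := K)
  simp only [MulMemClass.coe_mul, AddSubgroupClass.coe_sub, coe_tA, coe_tppA, OneMemClass.coe_one]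
  field_simp
  ring

theorem tpA_sub_one_mul_tppA : (tpA K - 1) * tppA K = (tpA K - 1) - tppA K := by
  rw [tpA_sub_one]
  apply Subtype.ext
  have := one_sub_X_ne_zero (K := K)
  have := X_ne_zero (K := K)
  simp only [MulMemClass.coe_mul, AddSubgroupClass.coe_sub, NegMemClass.coe_neg, coe_tiA, coe_tppA]
  field_simp
  ring

theorem adjoin_tA_tpA_sub_one_tppA : Algebra.adjoin K {tA K, tpA K - 1, tppA K} = ⊤ := by
  have hgen :
      Algebra.adjoin K (((↑) : Arat K → RatFunc K) ⁻¹' {X, X⁻¹, (X - 1)⁻¹}) = ⊤ :=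
    Algebra.adjoin_adjoin_coe_preimage
  refine eq_top_iff.2 (hgen.ge.trans (Algebra.adjoin_le ?_))
  rintro x (hx | hx | hx)
  · have : x = tA K := Subtype.ext hx
    exact this ▸ Algebra.subset_adjoin (by simp)
  · have : x = -(tpA K - 1) := by rw [tpA_sub_one, neg_neg]; exact Subtype.ext hx
    exact this ▸ neg_mem (Algebra.subset_adjoin (by simp))
  · have : x = -tppA K :=
      Subtype.ext (by rw [hx, NegMemClass.coe_neg, coe_tppA, ← inv_neg, neg_sub])
    exact this ▸ neg_mem (Algebra.subset_adjoin (by simp))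

theorem DA_zero : DA K 0 = span K (range (tA K ^ ·)) := rfl

theorem DA_one : DA K 1 = span K (range fun n : ℕ => (tpA K - 1) * (tpA K - 1) ^ n) := by
  change span K (range fun n : ℕ => (tpA K - 1) * tpA K ^ n) = _
  rw [span_range_mul_pow, span_range_mul_pow, adjoin_singleton_sub_one]

theorem DA_two : DA K 2 = span K (range fun n : ℕ => tppA K * tppA K ^ n) := rfl

theorem iSup_DA_eq_top : ⨆ i, DA K i = ⊤ := by
  have hone : (1 : Arat K) ∈ DA K 0 := subset_span ⟨0, pow_zero _⟩
  have hab : tA K * (tpA K - 1) ∈ span K {tA K, tpA K - 1, 1} := by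
    rw [tA_mul_tpA_sub_one]
    exact neg_mem (subset_span (by simp))
  have hac : tA K * tppA K ∈ span K {tA K, tppA K, 1} := by
    rw [tA_mul_tppA]
    exact sub_mem (subset_span (by simp)) (subset_span (by simp))
  have hbc : (tpA K - 1) * tppA K ∈ span K {tpA K - 1, tppA K, 1} := by
    rw [tpA_sub_one_mul_tppA]
    exact sub_mem (subset_span (by simp)) (subset_span (by simp))
  have h1 := span_range_pow_le_sup (x := tpA K - 1) hone
  have h2 := span_range_pow_le_sup (x := tppA K) hone
  rw [← DA_one] at h1
  rw [← DA_two] at h2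
  rw [iSup_fin_three, eq_top_iff, ← Algebra.top_toSubmodule, ← adjoin_tA_tpA_sub_one_tppA]
  refine (adjoin_le_sup_span_range_pow hab hac hbc).trans (sup_le (sup_le ?_ ?_) ?_)
  · exact le_sup_of_le_left le_sup_left
  · exact h1.trans le_sup_left
  · exact h2.trans (sup_le_sup_right le_sup_left _)

/- The coefficients of `T ^ (-(m + 1))` in the Laurent expansion at `0`, and of
`(T - 1) ^ (-(m + 1))` in the expansion at `1` (`laurent 1` substitutes `T + 1` for `T`). -/
noncomputable def principalCoeffZero (m : ℕ) : Module.Dual K (Arat K) :=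
  laurentCoeff (-(m + 1 : ℤ)) ∘ₗ (Arat K).val.toLinearMap

noncomputable def principalCoeffOne (m : ℕ) : Module.Dual K (Arat K) :=
  laurentCoeff (-(m + 1 : ℤ)) ∘ₗ (laurent (1 : K)).toLinearMap ∘ₗ (Arat K).val.toLinearMap

theorem mem_iInf_ker_principalCoeffZero {x : Arat K} (hx : (x : RatFunc K) ∈ regularAtZero K) :
    x ∈ ⨅ m, LinearMap.ker (principalCoeffZero m) :=
  mem_iInf _ |>.2 fun _ => laurentCoeff_eq_zero_of_mem_regularAtZero hx (by omega)

theorem mem_iInf_ker_principalCoeffOne {x : Arat K}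
    (hx : laurent (1 : K) (x : RatFunc K) ∈ regularAtZero K) :
    x ∈ ⨅ m, LinearMap.ker (principalCoeffOne m) :=
  mem_iInf _ |>.2 fun _ => laurentCoeff_eq_zero_of_mem_regularAtZero hx (by omega)

theorem DA_two_sup_DA_zero_le :
    DA K 2 ⊔ DA K 0 ≤ ⨅ m, LinearMap.ker (principalCoeffZero m) := by
  have hX : X ∈ regularAtZero K := by
    rw [← algebraMap_X]; exact algebraMap_mem_regularAtZero _
  have hinv : (1 - X)⁻¹ ∈ regularAtZero K := by
    have := inv_algebraMap_mem_regularAtZero (K := K) (q := 1 - Polynomial.X) (by simp)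
    rwa [map_sub, map_one, algebraMap_X] at this
  rw [DA_two, DA_zero, ← span_union, span_le]
  rintro _ (⟨n, rfl⟩ | ⟨n, rfl⟩) <;> apply mem_iInf_ker_principalCoeffZero
  · rw [MulMemClass.coe_mul, SubmonoidClass.coe_pow, coe_tppA]
    exact mul_mem hinv (pow_mem hinv n)
  · rw [SubmonoidClass.coe_pow, coe_tA]
    exact pow_mem hX n

theorem DA_zero_sup_DA_one_le :
    DA K 0 ⊔ DA K 1 ≤ ⨅ m, LinearMap.ker (principalCoeffOne m) := by
  have hX : X + 1 ∈ regularAtZero K := by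
    have := algebraMap_mem_regularAtZero (K := K) (Polynomial.X + 1)
    rwa [map_add, map_one, algebraMap_X] at this
  have hinv : -(X + 1)⁻¹ ∈ regularAtZero K := by
    have := inv_algebraMap_mem_regularAtZero (K := K) (q := Polynomial.X + 1) (by simp)
    rw [map_add, map_one, algebraMap_X] at this
    exact neg_mem this
  rw [DA_zero, DA_one, ← span_union, span_le]
  rintro _ (⟨n, rfl⟩ | ⟨n, rfl⟩) <;> apply mem_iInf_ker_principalCoeffOne
  · rw [SubmonoidClass.coe_pow, coe_tA, map_pow, laurent_one_X]
    exact pow_mem hX n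
  · rw [MulMemClass.coe_mul, SubmonoidClass.coe_pow, coe_tpA_sub_one, map_mul, map_pow, map_neg,
      map_inv₀, laurent_one_X]
    exact mul_mem hinv (pow_mem hinv n)

theorem principalCoeffZero_tpA_sub_one_pow (m n : ℕ) :
    principalCoeffZero m ((tpA K - 1) * (tpA K - 1) ^ n) = if m = n then (-1) ^ (n + 1) else 0 := by
  change laurentCoeff _ (((tpA K - 1) * (tpA K - 1) ^ n : Arat K) : RatFunc K) = _
  rw [MulMemClass.coe_mul, SubmonoidClass.coe_pow, coe_tpA_sub_one, ← pow_succ',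
    laurentCoeff_neg_X_inv_pow]
  simp

theorem principalCoeffOne_tppA_pow (m n : ℕ) :
    principalCoeffOne m (tppA K * tppA K ^ n) = if m = n then (-1) ^ (n + 1) else 0 := by
  have h : laurent (1 : K) (1 - X)⁻¹ = -X⁻¹ := by
    rw [map_inv₀, map_sub, map_one, laurent_one_X, sub_add_cancel_right, inv_neg]
  change laurentCoeff _ (laurent (1 : K) ((tppA K * tppA K ^ n : Arat K) : RatFunc K)) = _
  rw [MulMemClass.coe_mul, SubmonoidClass.coe_pow, coe_tppA, map_mul, map_pow, h, ← pow_succ',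
    laurentCoeff_neg_X_inv_pow]
  simp

theorem disjoint_DA_one : Disjoint (DA K 1) (DA K 2 ⊔ DA K 0) := by
  refine Disjoint.mono_right DA_two_sup_DA_zero_le ?_
  rw [DA_one]
  refine disjoint_span_range_iInf_ker _ _ (fun n => ?_) (fun m n hmn => ?_)
  · rw [principalCoeffZero_tpA_sub_one_pow, if_pos rfl]
    exact pow_ne_zero _ (neg_ne_zero.2 one_ne_zero)
  · rw [principalCoeffZero_tpA_sub_one_pow, if_neg hmn]

theorem disjoint_DA_two : Disjoint (DA K 2) (DA K 0 ⊔ DA K 1) := by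
  refine Disjoint.mono_right DA_zero_sup_DA_one_le ?_
  rw [DA_two]
  refine disjoint_span_range_iInf_ker _ _ (fun n => ?_) (fun m n hmn => ?_)
  · rw [principalCoeffOne_tppA_pow, if_pos rfl]
    exact pow_ne_zero _ (neg_ne_zero.2 one_ne_zero)
  · rw [principalCoeffOne_tppA_pow, if_neg hmn]

end Arat

open Arat in
theorem stmt9_general (K : Type*) [Field K] :
    DirectSum.IsInternal (DA K) := by
  rw [DirectSum.isInternal_submodule_iff_iSupIndep_and_iSup_eq_top, iSupIndep_fin_three]
  have h1 := disjoint_DA_one (K := K)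
  have h2 := disjoint_DA_two (K := K)
  have h0 : Disjoint (DA K 0) (DA K 1 ⊔ DA K 2) :=
    (h1.mono_right le_sup_right).symm.disjoint_sup_right_of_disjoint_sup_left h2.symm
  exact ⟨⟨h0, h1, h2⟩, iSup_DA_eq_top⟩

/-- `A = K[T] ⊕ (T'-1)K[T'] ⊕ T''K[T'']` as `K`-vector spaces. -/
theorem stmt9 (K : Type*) [Field K] [CharZero K] :
    DirectSum.IsInternal (DA K) :=
  stmt9_general K
end
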